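/- Let φ(u) = e^u - 1 for u ≥ 0 and let f(x) = ln(x^{-1/2}) for x ∈ (0,1], f(0) = 0, extended 1-periodically to ℝ. Then for every t ∈ (0, 1/2], ∫_0^1 φ(2|f(x+t) - f(x)|) dx = +∞; in particular the integral over [0, 1-t] equals ∫_t^1 t/(z-t) dz = +∞. -/

import Mathlib

open Filter MeasureTheory
open scoped ENNReal

/-- `f(x) = ln(x^{-1/2})` on `(0,1]`, `f(0) = 0`, extended `1`-periodically to `ℝ`. -/
noncomputable def fLog (x : ℝ) : ℝ :=
  if Int.fract x = 0 then 0 else -(1 / 2) * Real.log (Int.fract x)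

lemma core_div_lintegral_top (c a : ℝ) (hc : 0 < c) (ha : 0 < a) :
    (∫⁻ x in Set.Ioo (0 : ℝ) a, ENNReal.ofReal (c / x)) = ⊤ := by
  by_contra h
  have hm : AEStronglyMeasurable (fun x : ℝ => c / x)
      (volume.restrict (Set.Ioo (0:ℝ) a)) :=
    (measurable_const.div measurable_id).aestronglyMeasurable
  have hpos : 0 ≤ᵐ[volume.restrict (Set.Ioo (0:ℝ) a)] fun x : ℝ => c / x := by
    filter_upwards [ae_restrict_mem measurableSet_Ioo] with x hx
    exact div_nonneg hc.le hx.1.le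
  have hint : Integrable (fun x : ℝ => c / x) (volume.restrict (Set.Ioo (0:ℝ) a)) :=
    (MeasureTheory.lintegral_ofReal_ne_top_iff_integrable hm hpos).mp h
  have hint2 : IntegrableOn (fun x : ℝ => x ^ (-1 : ℝ)) (Set.Ioo (0:ℝ) a) := by
    have := hint.smul (c⁻¹)
    refine (integrableOn_congr_fun ?_ measurableSet_Ioo).mp this
    intro x hx
    simp [Real.rpow_neg_one, smul_eq_mul, div_eq_mul_inv,
      ← mul_assoc, inv_mul_cancel₀ hc.ne']
  rw [intervalIntegral.integrableOn_Ioo_rpow_iff ha] at hint2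
  linarith

lemma coreT_div_lintegral_top (c t b : ℝ) (hc : 0 < c) (htb : t < b) :
    (∫⁻ z in Set.Ioo t b, ENNReal.ofReal (c / (z - t))) = ⊤ := by
  have hf : Measurable fun z : ℝ => ENNReal.ofReal (c / (z - t)) :=
    ENNReal.measurable_ofReal.comp (measurable_const.div (measurable_id.sub measurable_const))
  have hmp : MeasurePreserving (fun x : ℝ => x + t) volume volume :=
    measurePreserving_add_right volume t
  have key := hmp.setLIntegral_comp_preimage (measurableSet_Ioo (a := t) (b := b)) hf
  have hpre : (fun x : ℝ => x + t) ⁻¹' Set.Ioo t b = Set.Ioo 0 (b - t) := by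
    ext x; simp [Set.mem_Ioo]
  rw [hpre] at key
  rw [← key]
  have : (∫⁻ x in Set.Ioo (0:ℝ) (b - t), ENNReal.ofReal (c / (x + t - t)))
      = ∫⁻ x in Set.Ioo (0:ℝ) (b - t), ENNReal.ofReal (c / x) := by
    simp [add_sub_cancel_right]
  rw [this]
  exact core_div_lintegral_top c (b - t) hc (by linarith)

/-- with `φ(u) = e^u - 1`, for every `t ∈ (0, 1/2]` one has
`∫_0^1 φ(2|f(x+t) - f(x)|) dx = +∞`; in particular
`∫_t^1 t/(z-t) dz = +∞`. -/
theorem stmt_14 :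
    ∀ t : ℝ, 0 < t → t ≤ 1 / 2 →
      (∫⁻ x in Set.Icc (0 : ℝ) 1,
          ENNReal.ofReal (Real.exp (2 * |fLog (x + t) - fLog x|) - 1)) = ⊤ ∧
      (∫⁻ z in Set.Icc t 1, ENNReal.ofReal (t / (z - t))) = ⊤ := by
  intro t ht ht2
  constructor
  · -- restrict to Ioo 0 (1 - t), where the integrand equals t / x
    have hsub : Set.Ioo (0:ℝ) (1 - t) ⊆ Set.Icc (0:ℝ) 1 := by
      intro x hx; exact ⟨hx.1.le, by linarith [hx.2]⟩
    refine eq_top_mono (MeasureTheory.lintegral_mono_set hsub) ?_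
    have hcong : (∫⁻ x in Set.Ioo (0:ℝ) (1 - t),
        ENNReal.ofReal (Real.exp (2 * |fLog (x + t) - fLog x|) - 1))
        = ∫⁻ x in Set.Ioo (0:ℝ) (1 - t), ENNReal.ofReal (t / x) := by
      refine MeasureTheory.setLIntegral_congr_fun measurableSet_Ioo ?_
      intro x hx; beta_reduce
      have hx0 : 0 < x := hx.1
      have hx1 : x < 1 := by linarith [hx.2]
      have hxt1 : x + t < 1 := by linarith [hx.2]
      have h1 : Int.fract x = x := Int.fract_eq_self.mpr ⟨hx0.le, hx1⟩
      have h2 : Int.fract (x + t) = x + t := Int.fract_eq_self.mpr ⟨by linarith, hxt1⟩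
      have hfx : fLog x = -(1 / 2) * Real.log x := by
        rw [fLog, h1, if_neg hx0.ne']
      have hfxt : fLog (x + t) = -(1 / 2) * Real.log (x + t) := by
        rw [fLog, h2, if_neg (by positivity : x + t ≠ 0)]
      have hlog : Real.log x ≤ Real.log (x + t) :=
        Real.log_le_log hx0 (by linarith)
      have habs : |fLog (x + t) - fLog x|
          = (1 / 2) * (Real.log (x + t) - Real.log x) := by
        rw [hfx, hfxt, abs_of_nonpos (by nlinarith)]
        ring
      have h2abs : 2 * |fLog (x + t) - fLog x| = Real.log ((x + t) / x) := by
        rw [habs, Real.log_div (by positivity) hx0.ne']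
        ring
      rw [h2abs, Real.exp_log (by positivity)]
      congr 1
      field_simp
      ring
    rw [hcong]
    exact core_div_lintegral_top t (1 - t) ht (by linarith)
  · refine eq_top_mono (MeasureTheory.lintegral_mono_set Set.Ioo_subset_Icc_self) ?_
    exact coreT_div_lintegral_top t t 1 ht (by linarith)
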